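/- arXiv:1411.1735 — 2 statements merged into one kernel-verified Lean document; each statement's English description precedes it below -/
import Mathlib

section
/- Suppose three maps d₁, d₂, d₃ : ℝ² → ℝ³ form an orthonormal frame at every point, are C², and satisfy ∂ₛdₖ = κ × dₖ and ∂ₜdₖ = ω × dₖ for k = 1,2,3, where κ, ω : ℝ² → ℝ³ are C¹. Then the compatibility equation ∂ₜκ = ∂ₛω + ω × κ holds at every point. -/
/-!
Equality of the mixed partials ∂ₜ∂ₛdₖ = ∂ₛ∂ₜdₖ, expanded with the product rule for × and the
Jacobi identity, says that (∂ₜκ - ∂ₛω - ω × κ) × dₖ = 0 for each k. An orthonormal frame spans ℝ³,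
and a vector whose cross product with a spanning family vanishes is zero.
-/

open Matrix

theorem fderiv_cross_apply {𝕜 E : Type*} [NontriviallyNormedField 𝕜] [CompleteSpace 𝕜]
    [NormedAddCommGroup E] [NormedSpace 𝕜 E] {a b : E → Fin 3 → 𝕜} {x : E}
    (ha : DifferentiableAt 𝕜 a x) (hb : DifferentiableAt 𝕜 b x) (v : E) :
    fderiv 𝕜 (fun y => a y ⨯₃ b y) x v = fderiv 𝕜 a x v ⨯₃ b x + a x ⨯₃ fderiv 𝕜 b x v := by
  have h := crossProduct.toContinuousBilinearMap.fderiv_of_bilinear ha hb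
  simp only [LinearMap.toContinuousBilinearMap_apply] at h
  rw [h]
  simp [add_comm]

theorem fderiv_fderiv_apply {𝕜 E F : Type*} [NontriviallyNormedField 𝕜]
    [NormedAddCommGroup E] [NormedSpace 𝕜 E] [NormedAddCommGroup F] [NormedSpace 𝕜 F]
    {f : E → F} {x : E} (hf : DifferentiableAt 𝕜 (fderiv 𝕜 f) x) (v w : E) :
    fderiv 𝕜 (fun y => fderiv 𝕜 f y v) x w = fderiv 𝕜 (fderiv 𝕜 f) x w v := by
  rw [fderiv_clm_apply hf (differentiableAt_const v)]
  simp

theorem ContDiffAt.fderiv_fderiv_apply_comm {E F : Type*}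
    [NormedAddCommGroup E] [NormedSpace ℝ E] [NormedAddCommGroup F] [NormedSpace ℝ F]
    {f : E → F} {x : E} (hf : ContDiffAt ℝ 2 f x) (v w : E) :
    fderiv ℝ (fun y => fderiv ℝ f y v) x w = fderiv ℝ (fun y => fderiv ℝ f y w) x v := by
  have hf' : DifferentiableAt ℝ (fderiv ℝ f) x :=
    (hf.fderiv_right (m := 1) le_rfl).differentiableAt one_ne_zero
  rw [fderiv_fderiv_apply hf', fderiv_fderiv_apply hf']
  exact (hf.isSymmSndFDerivAt (by simp)).eq w v

theorem linearIndependent_of_dotProduct_eq_ite {R ι n : Type*} [CommRing R] [Fintype ι]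
    [DecidableEq ι] [Fintype n] {e : ι → n → R}
    (he : ∀ i j, e i ⬝ᵥ e j = if i = j then 1 else 0) : LinearIndependent R e := by
  rw [Fintype.linearIndependent_iff]
  intro g hg i
  have := congrArg (e i ⬝ᵥ ·) hg
  simpa [dotProduct_sum, dotProduct_smul, he] using this

theorem eq_zero_of_forall_cross_eq_zero {R : Type*} [CommRing R] {u : Fin 3 → R}
    (h : ∀ v, u ⨯₃ v = 0) : u = 0 := by
  ext i
  fin_cases i
  · simpa [cross_apply] using congrFun (h (Pi.single 2 1)) 1
  · simpa [cross_apply] using congrFun (h (Pi.single 0 1)) 2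
  · simpa [cross_apply] using congrFun (h (Pi.single 1 1)) 0

theorem eq_zero_of_cross_eq_zero_of_span_eq_top {R ι : Type*} [CommRing R] {u : Fin 3 → R}
    {e : ι → Fin 3 → R} (he : Submodule.span R (Set.range e) = ⊤) (h : ∀ i, u ⨯₃ e i = 0) :
    u = 0 :=
  eq_zero_of_forall_cross_eq_zero <|
    LinearMap.congr_fun (LinearMap.ext_on_range (g := 0) he h)

theorem cross_eq_zero_of_fderiv_eq_cross {E : Type*} [NormedAddCommGroup E] [NormedSpace ℝ E]
    {e κ ω : E → Fin 3 → ℝ} {v w x : E} (he : ContDiffAt ℝ 2 e x)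
    (hκ : DifferentiableAt ℝ κ x) (hω : DifferentiableAt ℝ ω x)
    (hv : ∀ y, fderiv ℝ e y v = κ y ⨯₃ e y) (hw : ∀ y, fderiv ℝ e y w = ω y ⨯₃ e y) :
    (fderiv ℝ κ x w - fderiv ℝ ω x v - ω x ⨯₃ κ x) ⨯₃ e x = 0 := by
  have hed : DifferentiableAt ℝ e x := he.differentiableAt two_ne_zero
  have hmixed := he.fderiv_fderiv_apply_comm v w
  simp only [hv, hw] at hmixed
  rw [fderiv_cross_apply hκ hed, fderiv_cross_apply hω hed, hv, hw] at hmixed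
  rw [map_sub, map_sub, LinearMap.sub_apply, LinearMap.sub_apply, cross_cross]
  linear_combination (norm := abel) hmixed

theorem stmt_7 (d : Fin 3 → ℝ × ℝ → Fin 3 → ℝ) (κ ω : ℝ × ℝ → Fin 3 → ℝ)
    (hd : ∀ k, ContDiff ℝ 2 (d k)) (hκ : ContDiff ℝ 1 κ) (hω : ContDiff ℝ 1 ω)
    (horth : ∀ (z : ℝ × ℝ) (i j : Fin 3),
      d i z ⬝ᵥ d j z = if i = j then 1 else 0)
    (hs : ∀ (k : Fin 3) (z : ℝ × ℝ), fderiv ℝ (d k) z (1, 0) = κ z ⨯₃ d k z)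
    (ht : ∀ (k : Fin 3) (z : ℝ × ℝ), fderiv ℝ (d k) z (0, 1) = ω z ⨯₃ d k z) :
    ∀ z : ℝ × ℝ,
      fderiv ℝ κ z (0, 1) = fderiv ℝ ω z (1, 0) + ω z ⨯₃ κ z := by
  intro z
  have hspan : Submodule.span ℝ (Set.range fun k => d k z) = ⊤ :=
    (linearIndependent_of_dotProduct_eq_ite (horth z)).span_eq_top_of_card_eq_finrank (by simp)
  have hcross k := cross_eq_zero_of_fderiv_eq_cross (hd k).contDiffAt
    (hκ.differentiable one_ne_zero z) (hω.differentiable one_ne_zero z) (hs k) (ht k)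
  rw [← sub_eq_zero, ← sub_sub]
  exact eq_zero_of_cross_eq_zero_of_span_eq_top hspan hcross
end

section
/- For p ∈ ℝ³ with r = ‖p‖ > 0 not an integer multiple of 2π, the matrix M(p) = I + ((r - sin r)/r³)·A² - ((1 - cos r)/r²)·A is invertible, where A is the cross-product matrix of p. -/
open Matrix

/-- The cross-product matrix of `p`: `A.mulVec v = p ×₃ v`. -/
def crossMatrix (p : Fin 3 → ℝ) : Matrix (Fin 3) (Fin 3) ℝ :=
  !![0, -p 2, p 1; p 2, 0, -p 0; -p 1, p 0, 0]

/-- The eigenvalues of `crossMatrix p` are `0, ±i‖p‖`, hence those of this matrix are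
`1, 1 - a‖p‖² ± i b‖p‖`. -/
theorem det_one_add_smul_crossMatrix_sq_sub_smul (p : Fin 3 → ℝ) (a b : ℝ) :
    (1 + a • crossMatrix p ^ 2 - b • crossMatrix p).det =
      (1 - a * (p 0 ^ 2 + p 1 ^ 2 + p 2 ^ 2)) ^ 2 + b ^ 2 * (p 0 ^ 2 + p 1 ^ 2 + p 2 ^ 2) := by
  rw [det_fin_three]
  simp only [crossMatrix, Fin.isValue, sq, cons_mul, Nat.succ_eq_add_one, Nat.reduceAdd,
    vecMul_cons, head_cons, zero_smul, tail_cons, neg_smul, smul_cons, smul_eq_mul, mul_zero,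
    mul_neg, smul_empty, neg_cons, neg_zero, neg_neg, neg_empty, empty_vecMul, add_zero, add_cons,
    zero_add, empty_add_empty, empty_mul, Equiv.symm_apply_apply, smul_of, Matrix.sub_apply,
    Matrix.add_apply, one_apply, ↓reduceIte, of_apply, cons_val', cons_val_zero, cons_val_fin_one,
    sub_zero, cons_val_one, cons_val, Fin.reduceEq, sub_neg_eq_add, zero_ne_one, one_ne_zero]
  ring

theorem sq_one_sub_sin_div_add_sq_one_sub_cos_div {r : ℝ} (hr : r ≠ 0) :
    (1 - (r - Real.sin r) / r ^ 3 * r ^ 2) ^ 2 + ((1 - Real.cos r) / r ^ 2) ^ 2 * r ^ 2 =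
      2 * (1 - Real.cos r) / r ^ 2 := by
  field_simp
  linear_combination Real.sin_sq_add_cos_sq r

theorem stmt_14_general (p : Fin 3 → ℝ) (r : ℝ)
    (hr2 : r ^ 2 = p 0 ^ 2 + p 1 ^ 2 + p 2 ^ 2)
    (hmult : ∀ k : ℤ, r ≠ 2 * Real.pi * k) :
    IsUnit (1 + ((r - Real.sin r) / r ^ 3) • (crossMatrix p) ^ 2
      - ((1 - Real.cos r) / r ^ 2) • crossMatrix p) := by
  have hr : r ≠ 0 := by simpa using hmult 0
  have hcos : Real.cos r < 1 := by
    refine (Real.cos_le_one r).lt_of_ne fun h => ?_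
    obtain ⟨k, hk⟩ := (Real.cos_eq_one_iff r).mp h
    exact hmult k (by rw [← hk]; ring)
  rw [isUnit_iff_isUnit_det, isUnit_iff_ne_zero, det_one_add_smul_crossMatrix_sq_sub_smul, ← hr2,
    sq_one_sub_sin_div_add_sq_one_sub_cos_div hr]
  have : 0 < 1 - Real.cos r := by linarith
  positivity

theorem stmt_14 (p : Fin 3 → ℝ) (r : ℝ) (hr : 0 < r)
    (hr2 : r ^ 2 = p 0 ^ 2 + p 1 ^ 2 + p 2 ^ 2)
    (hmult : ∀ k : ℤ, r ≠ 2 * Real.pi * k) :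
    IsUnit (1 + ((r - Real.sin r) / r ^ 3) • (crossMatrix p) ^ 2
      - ((1 - Real.cos r) / r ^ 2) • crossMatrix p) :=
  stmt_14_general p r hr2 hmult
end
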